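/- arXiv:1501.02933 — 3 statements merged into one kernel-verified Lean document; each statement's English description precedes it below -/
import Mathlib

section
/- Let G be a group acting on a set X and H a subgroup acting on a subset C ⊆ X, with the property that: every G-orbit of an element of X meets C, and whenever P·u = Q·v with P,Q ∈ G and u,v ∈ C, one has P^{-1}Q ∈ H. Then the natural map G ×_H C → X, [(P,u)] ↦ P·u, is a bijection. In particular, for K algebraically closed, Rep_2(m)_{ss}(K) is in bijection with PGL_2(K) ×_{H_2(K)} F_2(K^m). -/
/-- let a group `G` act on a set `X`, `C ⊆ X`, and `H ≤ G`, such that every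
`G`-orbit meets `C` and whenever `P • u = Q • v` with `u, v ∈ C` one has `P⁻¹Q ∈ H`.  Then
the natural map `G ×_H C → X`, `[(P, u)] ↦ P • u`, is a bijection.  (Applied with
`G = PGL₂(K)`, `X = Rep₂(m)_{ss}(K)`, `C = F₂(K^m)` and `H = H₂(K)` this gives
`Rep₂(m)_{ss}(K) ≅ PGL₂(K) ×_{H₂(K)} F₂(K^m)`.) -/
theorem stmt_7 {G X : Type*} [Group G] [MulAction G X] (C : Set X) (H : Subgroup G)
    (hmeet : ∀ x : X, ∃ P : G, ∃ u ∈ C, P • u = x)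
    (hsep : ∀ P Q : G, ∀ u ∈ C, ∀ v ∈ C, P • u = Q • v → P⁻¹ * Q ∈ H) :
    Function.Bijective
      (Quot.lift (fun pu : G × C => pu.1 • (pu.2 : X))
        (by
          rintro ⟨P, u⟩ ⟨Q, v⟩ ⟨B, hB, rfl, hv⟩
          show P • (u : X) = (P * B) • (v : X)
          rw [hv, mul_smul, smul_inv_smul]) :
        Quot (fun a b : G × C => ∃ B ∈ H, b.1 = a.1 * B ∧ (b.2 : X) = B⁻¹ • (a.2 : X)) → X) := by
  constructor
  · intro a b
    induction a using Quot.ind with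
    | _ p =>
      induction b using Quot.ind with
      | _ q =>
        obtain ⟨P, u⟩ := p
        obtain ⟨Q, v⟩ := q
        intro h
        simp only [Quot.lift] at h
        have hB : P⁻¹ * Q ∈ H := hsep P Q u u.2 v v.2 h
        apply Quot.sound
        refine ⟨P⁻¹ * Q, hB, by group, ?_⟩
        show (v : X) = (P⁻¹ * Q)⁻¹ • (u : X)
        rw [mul_inv_rev, inv_inv, mul_smul, h, inv_smul_smul]
  · intro x
    obtain ⟨P, u, hu, h⟩ := hmeet x
    exact ⟨Quot.mk _ (P, ⟨u, hu⟩), h⟩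
end

section
/- The number of m-tuples (A_1,...,A_m) of 2×2 matrices over F_q that are simultaneously conjugate (over \bar{F}_q, Frobenius-equivariantly counted) into the unipotent algebra N_2 and generate it, i.e. |Rep_2(m)_u(F_q)|, equals q^m(q^m - 1)(q + 1). -/
open Matrix

section Helpers

variable {K : Type*} [Field K]

private def Emat (K : Type*) [Field K] : Matrix (Fin 2) (Fin 2) K := !![0,1;0,0]

private lemma Emat_eq_std : Emat K = Matrix.single 0 1 (1 : K) := by
  ext i j; fin_cases i <;> fin_cases j <;> simp [Matrix.single, Emat]

private lemma Emat_mul_self : Emat K * Emat K = 0 := by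
  ext i j; fin_cases i <;> fin_cases j <;>
    simp [Emat, Matrix.mul_apply, Fin.sum_univ_two]

private def spanOneE (K : Type*) [Field K] : Subalgebra K (Matrix (Fin 2) (Fin 2) K) where
  carrier := {X | ∃ α β : K, X = α • 1 + β • Emat K}
  add_mem' := by
    rintro x y ⟨a, b, rfl⟩ ⟨c, d, rfl⟩
    exact ⟨a + c, b + d, by module⟩
  mul_mem' := by
    rintro x y ⟨a, b, rfl⟩ ⟨c, d, rfl⟩
    refine ⟨a * c, a * d + b * c, ?_⟩
    ext i j
    fin_cases i <;> fin_cases j <;>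
      (simp [Emat, Matrix.mul_apply, Fin.sum_univ_two, Matrix.one_apply]; try ring)
  algebraMap_mem' := fun r => ⟨r, 0, by simp [Algebra.algebraMap_eq_smul_one]⟩

private lemma mem_spanOneE (X : Matrix (Fin 2) (Fin 2) K) :
    X ∈ spanOneE K ↔ ∃ α β : K, X = α • 1 + β • Emat K := Iff.rfl

private lemma mem_adjE (X : Matrix (Fin 2) (Fin 2) K) :
    X ∈ Algebra.adjoin K {Emat K} ↔ ∃ α β : K, X = α • 1 + β • Emat K := by
  constructor
  · intro hX
    have h : Algebra.adjoin K {Emat K} ≤ spanOneE K :=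
      Algebra.adjoin_le (by
        rw [Set.singleton_subset_iff, SetLike.mem_coe, mem_spanOneE]
        exact ⟨0, 1, by rw [zero_smul, one_smul, zero_add]⟩)
    rw [← mem_spanOneE]
    exact h hX
  · rintro ⟨a, b, rfl⟩
    exact add_mem (Subalgebra.smul_mem _ (Subalgebra.one_mem _) _)
      (Subalgebra.smul_mem _ (Algebra.self_mem_adjoin_singleton K _) _)

private lemma conj_nilp (N : Matrix (Fin 2) (Fin 2) K) (hN : N ≠ 0) (hN2 : N * N = 0) :
    ∃ Q : Matrix (Fin 2) (Fin 2) K, Q.det ≠ 0 ∧ N * Q = Q * Emat K := by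
  have hsq : ∀ i j, N i 0 * N 0 j + N i 1 * N 1 j = 0 := by
    intro i j
    have := congr_fun (congr_fun hN2 i) j
    simpa [Matrix.mul_apply, Fin.sum_univ_two] using this
  have hex : ∃ k l, N k l ≠ 0 := by
    by_contra h
    push_neg at h
    exact hN (by ext i j; simpa using h i j)
  obtain ⟨k, l, hkl⟩ := hex
  fin_cases l
  · have h10 : N 1 0 ≠ 0 := by
      intro h10
      have h00 : N 0 0 = 0 := by
        have h := hsq 0 0
        rw [h10] at h
        exact mul_self_eq_zero.mp (by linear_combination h)
      fin_cases k <;> simp_all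
    refine ⟨!![N 0 0, 1; N 1 0, 0], by simpa [Matrix.det_fin_two] using h10, ?_⟩
    ext i j
    fin_cases i <;> fin_cases j <;>
      simp [Emat, Matrix.mul_apply, Fin.sum_univ_two] <;>
      linear_combination hsq _ 0
  · have h01 : N 0 1 ≠ 0 := by
      intro h01
      have h11 : N 1 1 = 0 := by
        have h := hsq 1 1
        rw [h01] at h
        exact mul_self_eq_zero.mp (by linear_combination h)
      fin_cases k <;> simp_all
    refine ⟨!![N 0 1, 0; N 1 1, 1], by simpa [Matrix.det_fin_two] using h01, ?_⟩
    ext i j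
    fin_cases i <;> fin_cases j <;>
      simp [Emat, Matrix.mul_apply, Fin.sum_univ_two] <;>
      linear_combination hsq _ 1

private lemma map_smul_one_add_smul (L : Type*) [Field L] (f : K →+* L) (α β : K)
    (N : Matrix (Fin 2) (Fin 2) K) :
    (α • 1 + β • N).map f = f α • 1 + f β • N.map f := by
  ext i j
  simp [Matrix.map_apply, Matrix.one_apply, apply_ite f]

private lemma map_smul_mat {L : Type*} [Field L] (f : K →+* L) (c : K)
    (N : Matrix (Fin 2) (Fin 2) K) : (c • N).map f = f c • N.map f := by
  ext i j; simp [Matrix.map_apply]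

private lemma scalarE_det (α β : K) : (α • 1 + β • Emat K).det = α * α := by
  rw [Matrix.det_fin_two]
  simp [Emat, Matrix.one_apply]

private lemma scalarE_trace (α β : K) :
    (α • (1 : Matrix (Fin 2) (Fin 2) K) + β • Emat K).trace = 2 * α := by
  simp [Matrix.trace, Fin.sum_univ_two, Emat, Matrix.one_apply]
  ring

private lemma descend_scalar (Fq : Type*) [Field Fq] [Fintype Fq] (α : AlgebraicClosure Fq)
    (h2 : ∃ u : Fq, algebraMap Fq (AlgebraicClosure Fq) u = 2 * α)
    (hs : ∃ d : Fq, algebraMap Fq (AlgebraicClosure Fq) d = α * α) :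
    ∃ s : Fq, algebraMap Fq (AlgebraicClosure Fq) s = α := by
  set φ := algebraMap Fq (AlgebraicClosure Fq) with hφdef
  have h2L : φ (2 : Fq) = (2 : AlgebraicClosure Fq) := map_ofNat φ 2
  by_cases hchar : (2 : Fq) = 0
  · obtain ⟨d, hd⟩ := hs
    have hinj : Function.Injective (fun x : Fq => x * x) := by
      intro x y hxy
      simp only at hxy
      have h0 : (x - y) * (x - y) = 0 := by linear_combination hxy + (y*y - x*y) * hchar
      exact sub_eq_zero.mp (mul_self_eq_zero.mp h0)
    obtain ⟨s, hss⟩ := Finite.surjective_of_injective hinj d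
    simp only at hss
    have h2L0 : (2 : AlgebraicClosure Fq) = 0 := by rw [← h2L, hchar, map_zero]
    refine ⟨-s, ?_⟩
    have hss' : φ s * φ s = φ d := by rw [← _root_.map_mul, hss]
    have h0 : (α + φ s) * (α + φ s) = 0 := by
      linear_combination hss' + hd + (α * α + α * φ s) * h2L0
    rw [map_neg]
    exact neg_eq_of_add_eq_zero_left (mul_self_eq_zero.mp h0)
  · obtain ⟨u, hu⟩ := h2
    have h2ne : (2 : AlgebraicClosure Fq) ≠ 0 := by rw [← h2L]; exact (map_ne_zero φ).mpr hchar
    refine ⟨u / 2, ?_⟩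
    rw [map_div₀, hu, h2L, mul_comm, mul_div_assoc, div_self h2ne, mul_one]

private lemma key_back {m : ℕ} (Fq : Type*) [Field Fq] (A : Fin m → Matrix (Fin 2) (Fin 2) Fq)
    (a b : Fin m → Fq) (N : Matrix (Fin 2) (Fin 2) Fq) (hb : b ≠ 0) (hN : N ≠ 0)
    (hN2 : N * N = 0) (hA : ∀ i, A i = a i • 1 + b i • N) :
    ∃ P : GL (Fin 2) (AlgebraicClosure Fq),
      Algebra.adjoin (AlgebraicClosure Fq)
          (Set.range fun i => (P : Matrix (Fin 2) (Fin 2) (AlgebraicClosure Fq)) *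
            (A i).map (algebraMap Fq (AlgebraicClosure Fq)) *
            ((P⁻¹ : GL (Fin 2) (AlgebraicClosure Fq)) :
              Matrix (Fin 2) (Fin 2) (AlgebraicClosure Fq)))
        = Algebra.adjoin (AlgebraicClosure Fq) {Emat (AlgebraicClosure Fq)} := by
  set L := AlgebraicClosure Fq
  set φ := algebraMap Fq L with hφdef
  obtain ⟨Q, hdet, hQ⟩ := conj_nilp N hN hN2
  have hEmap : (Emat Fq).map φ = Emat L := by
    ext i j; fin_cases i <;> fin_cases j <;> simp [Emat, Matrix.map_apply]
  have hdet' : IsUnit ((Q.map φ).det) := by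
    have h1 : (Q.map φ).det = φ Q.det := (RingHom.map_det φ Q).symm
    rw [h1]
    exact isUnit_iff_ne_zero.mpr ((map_ne_zero φ).mpr hdet)
  set PQ : GL (Fin 2) L := Matrix.GeneralLinearGroup.mk'' (Q.map φ) hdet' with hPQ
  refine ⟨PQ⁻¹, ?_⟩
  have hco : ((PQ⁻¹)⁻¹ : GL (Fin 2) L) = PQ := inv_inv PQ
  have hXQ : ((PQ⁻¹ : GL (Fin 2) L) : Matrix (Fin 2) (Fin 2) L) * (Q.map φ) = 1 :=
    Units.inv_mul PQ
  have hg : ∀ i, ((PQ⁻¹ : GL (Fin 2) L) : Matrix (Fin 2) (Fin 2) L) * (A i).map φ *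
      (((PQ⁻¹)⁻¹ : GL (Fin 2) L) : Matrix (Fin 2) (Fin 2) L)
      = φ (a i) • 1 + φ (b i) • Emat L := by
    intro i
    rw [hco]
    have hcoPQ : ((PQ : GL (Fin 2) L) : Matrix (Fin 2) (Fin 2) L) = Q.map φ := rfl
    rw [hcoPQ, hA i, map_smul_one_add_smul]
    have hNQ : (N.map φ) * (Q.map φ) = (Q.map φ) * Emat L := by
      rw [← Matrix.map_mul, ← hEmap, ← Matrix.map_mul, hQ]
    calc ((PQ⁻¹ : GL (Fin 2) L) : Matrix (Fin 2) (Fin 2) L) *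
          (φ (a i) • 1 + φ (b i) • N.map φ) * (Q.map φ)
        = φ (a i) • (((PQ⁻¹ : GL (Fin 2) L) : Matrix (Fin 2) (Fin 2) L) * Q.map φ) +
          φ (b i) • (((PQ⁻¹ : GL (Fin 2) L) : Matrix (Fin 2) (Fin 2) L) * ((N.map φ) * Q.map φ)) := by
          rw [mul_add, add_mul]
          simp [mul_smul_comm, smul_mul_assoc, mul_assoc]
      _ = φ (a i) • 1 + φ (b i) • Emat L := by
          rw [hXQ, hNQ, ← mul_assoc, hXQ, one_mul]
  apply le_antisymm
  · apply Algebra.adjoin_le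
    rintro x ⟨i, rfl⟩
    rw [SetLike.mem_coe, mem_adjE]
    exact ⟨φ (a i), φ (b i), hg i⟩
  · apply Algebra.adjoin_le
    rw [Set.singleton_subset_iff, SetLike.mem_coe]
    obtain ⟨j, hbj⟩ := Function.ne_iff.mp hb
    have hbj' : φ (b j) ≠ 0 := (map_ne_zero φ).mpr hbj
    have hgj : ((PQ⁻¹ : GL (Fin 2) L) : Matrix (Fin 2) (Fin 2) L) * (A j).map φ *
        (((PQ⁻¹)⁻¹ : GL (Fin 2) L) : Matrix (Fin 2) (Fin 2) L)
        ∈ Algebra.adjoin L (Set.range fun i =>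
          ((PQ⁻¹ : GL (Fin 2) L) : Matrix (Fin 2) (Fin 2) L) * (A i).map φ *
          (((PQ⁻¹)⁻¹ : GL (Fin 2) L) : Matrix (Fin 2) (Fin 2) L)) :=
      Algebra.subset_adjoin ⟨j, rfl⟩
    have hE : Emat L = (φ (b j))⁻¹ •
        (((PQ⁻¹ : GL (Fin 2) L) : Matrix (Fin 2) (Fin 2) L) * (A j).map φ *
          (((PQ⁻¹)⁻¹ : GL (Fin 2) L) : Matrix (Fin 2) (Fin 2) L) - φ (a j) • 1) := by
      rw [hg j, add_sub_cancel_left, inv_smul_smul₀ hbj']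
    rw [hE]
    exact Subalgebra.smul_mem _ (sub_mem hgj
      (Subalgebra.smul_mem _ (Subalgebra.one_mem _) _)) _

private lemma key_fwd {m : ℕ} (Fq : Type*) [Field Fq] [Fintype Fq]
    (A : Fin m → Matrix (Fin 2) (Fin 2) Fq) (P : GL (Fin 2) (AlgebraicClosure Fq))
    (hadj : Algebra.adjoin (AlgebraicClosure Fq)
        (Set.range fun i => (P : Matrix (Fin 2) (Fin 2) (AlgebraicClosure Fq)) *
          (A i).map (algebraMap Fq (AlgebraicClosure Fq)) *
          ((P⁻¹ : GL (Fin 2) (AlgebraicClosure Fq)) :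
            Matrix (Fin 2) (Fin 2) (AlgebraicClosure Fq)))
      = Algebra.adjoin (AlgebraicClosure Fq) {Emat (AlgebraicClosure Fq)}) :
    ∃ (a b : Fin m → Fq) (N : Matrix (Fin 2) (Fin 2) Fq), b ≠ 0 ∧ N ≠ 0 ∧ N * N = 0 ∧
      ∀ i, A i = a i • 1 + b i • N := by
  set φ := algebraMap Fq (AlgebraicClosure Fq) with hφdef
  have hφinj : Function.Injective φ := φ.injective
  set g : Fin m → Matrix (Fin 2) (Fin 2) (AlgebraicClosure Fq) :=
    fun i => (P : Matrix (Fin 2) (Fin 2) (AlgebraicClosure Fq)) * (A i).map φ *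
      ((P⁻¹ : GL (Fin 2) (AlgebraicClosure Fq)) :
        Matrix (Fin 2) (Fin 2) (AlgebraicClosure Fq)) with hgdef
  have hginv : ∀ i, (P : Matrix (Fin 2) (Fin 2) (AlgebraicClosure Fq)) * (A i).map φ *
      ((P⁻¹ : GL (Fin 2) (AlgebraicClosure Fq)) : Matrix (Fin 2) (Fin 2) (AlgebraicClosure Fq))
      ∈ Algebra.adjoin (AlgebraicClosure Fq) {Emat (AlgebraicClosure Fq)} := by
    intro i
    rw [← hadj]
    exact Algebra.subset_adjoin ⟨i, rfl⟩
  have hgmem : ∀ i, ∃ a b : AlgebraicClosure Fq, g i = a • 1 + b • Emat (AlgebraicClosure Fq) :=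
    fun i => (mem_adjE _).mp (hginv i)
  choose α β hαβ using hgmem
  have hPg : ∀ i, (A i).map φ =
      ((P⁻¹ : GL (Fin 2) (AlgebraicClosure Fq)) : Matrix (Fin 2) (Fin 2) (AlgebraicClosure Fq)) *
        g i * (P : Matrix (Fin 2) (Fin 2) (AlgebraicClosure Fq)) := by
    intro i
    rw [hgdef]
    simp only [← mul_assoc]
    rw [Units.inv_mul, one_mul, mul_assoc, Units.inv_mul, mul_one]
  have hβ : ∃ j, β j ≠ 0 := by
    by_contra h
    push_neg at h
    have hE : Emat (AlgebraicClosure Fq) ∈ Algebra.adjoin (AlgebraicClosure Fq) (Set.range g) := by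
      rw [hadj]
      exact Algebra.self_mem_adjoin_singleton _ _
    have hbot : Emat (AlgebraicClosure Fq) ∈
        (⊥ : Subalgebra (AlgebraicClosure Fq) (Matrix (Fin 2) (Fin 2) (AlgebraicClosure Fq))) := by
      refine Algebra.adjoin_le ?_ hE
      rintro x ⟨i, rfl⟩
      rw [SetLike.mem_coe, Algebra.mem_bot]
      exact ⟨α i, by rw [Algebra.algebraMap_eq_smul_one, hαβ i, h i, zero_smul, add_zero]⟩
    rw [Algebra.mem_bot] at hbot
    obtain ⟨r, hr⟩ := hbot
    rw [Algebra.algebraMap_eq_smul_one] at hr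
    have h01 := congr_fun (congr_fun hr 0) 1
    simp [Emat, Matrix.one_apply] at h01
  obtain ⟨j, hβj⟩ := hβ
  set M : Matrix (Fin 2) (Fin 2) (AlgebraicClosure Fq) :=
    ((P⁻¹ : GL (Fin 2) (AlgebraicClosure Fq)) : Matrix (Fin 2) (Fin 2) (AlgebraicClosure Fq)) *
      Emat (AlgebraicClosure Fq) * (P : Matrix (Fin 2) (Fin 2) (AlgebraicClosure Fq)) with hM
  have hgiM : ∀ i, (A i).map φ = α i • 1 + β i • M := by
    intro i
    rw [hPg i, hαβ i, hM]
    rw [mul_add, add_mul]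
    simp only [mul_smul_comm, smul_mul_assoc, mul_one]
    rw [Units.inv_mul]
  have htrmap : ∀ i, ((A i).map φ).trace = φ ((A i).trace) := by
    intro i
    simp [Matrix.trace, Matrix.diag, map_sum, Matrix.map_apply]
  have htr : ∀ i, φ ((A i).trace) = 2 * α i := by
    intro i
    rw [← htrmap i, hPg i, Matrix.trace_mul_comm, ← mul_assoc, Units.mul_inv, one_mul,
      hαβ i, scalarE_trace]
  have hdetmap : ∀ i, ((A i).map φ).det = φ ((A i).det) := by
    intro i
    rw [RingHom.map_det]
    rfl
  have hdet : ∀ i, φ ((A i).det) = α i * α i := by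
    intro i
    rw [← hdetmap i, hPg i, Matrix.det_mul, Matrix.det_mul, mul_comm, ← mul_assoc,
      ← Matrix.det_mul, Units.mul_inv, Matrix.det_one, one_mul, hαβ i, scalarE_det]
  have hα : ∀ i, ∃ s : Fq, φ s = α i := fun i =>
    descend_scalar Fq (α i) ⟨(A i).trace, htr i⟩ ⟨(A i).det, hdet i⟩
  choose a ha using hα
  have hEM : Emat (AlgebraicClosure Fq) =
      (P : Matrix (Fin 2) (Fin 2) (AlgebraicClosure Fq)) * M *
        ((P⁻¹ : GL (Fin 2) (AlgebraicClosure Fq)) : Matrix (Fin 2) (Fin 2) (AlgebraicClosure Fq)) := by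
    rw [hM]
    simp only [← mul_assoc]
    rw [Units.mul_inv, one_mul, mul_assoc, Units.mul_inv, mul_one]
  have hM0 : M ≠ 0 := by
    intro h
    rw [h, mul_zero, zero_mul] at hEM
    have := congr_fun (congr_fun hEM 0) 1
    simp [Emat] at this
  have hMM : M * M = 0 := by
    rw [hM]
    simp only [mul_assoc]
    rw [Units.mul_inv_cancel_left]
    simp only [← mul_assoc]
    rw [mul_assoc _ (Emat _) (Emat _), Emat_mul_self, mul_zero, zero_mul]
  have hNmap : ∀ i, (A i - a i • (1 : Matrix (Fin 2) (Fin 2) Fq)).map φ = β i • M := by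
    intro i
    have hsub : (A i - a i • (1 : Matrix (Fin 2) (Fin 2) Fq)).map φ =
        (A i).map φ - φ (a i) • 1 := by
      ext i' j'
      simp [Matrix.map_apply, Matrix.one_apply, apply_ite φ]
    rw [hsub, hgiM i, ha i, add_sub_cancel_left]
  set N := A j - a j • (1 : Matrix (Fin 2) (Fin 2) Fq) with hNdef
  have hNφ : N.map φ = β j • M := hNmap j
  have hNne : N ≠ 0 := by
    intro h
    rw [h] at hNφ
    have : β j • M = 0 := by
      rw [← hNφ]
      ext i' j'
      simp [Matrix.map_apply]
    rcases smul_eq_zero.mp this with h' | h'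
    · exact hβj h'
    · exact hM0 h'
  have hN2 : N * N = 0 := by
    apply Matrix.map_injective hφinj
    show (N * N).map φ = (0 : Matrix (Fin 2) (Fin 2) Fq).map φ
    rw [Matrix.map_mul, hNφ, smul_mul_smul_comm, hMM, smul_zero]
    ext i' j'
    simp [Matrix.map_apply]
  have hex : ∃ k l, N k l ≠ 0 := by
    by_contra h
    push_neg at h
    exact hNne (by ext i' j'; simpa using h i' j')
  obtain ⟨k, l, hkl⟩ := hex
  have hMkl : φ (N k l) = β j * M k l := by
    have := congr_fun (congr_fun hNφ k) l
    simpa [Matrix.map_apply] using this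
  have hMklne : M k l ≠ 0 := by
    intro h
    rw [h, mul_zero] at hMkl
    exact hkl (hφinj (by rw [hMkl, map_zero]))
  set b : Fin m → Fq := fun i => (A i - a i • 1) k l * (N k l)⁻¹ with hbdef
  have hkey : ∀ i, A i - a i • 1 = b i • N := by
    intro i
    apply Matrix.map_injective hφinj
    show (A i - a i • 1).map φ = (b i • N).map φ
    rw [map_smul_mat, hNφ, hNmap i, smul_smul]
    congr 1
    have hentry : φ ((A i - a i • 1) k l) = β i * M k l := by
      have := congr_fun (congr_fun (hNmap i) k) l
      simpa [Matrix.map_apply] using this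
    simp only [hbdef, _root_.map_mul, map_inv₀]
    rw [hentry, hMkl]
    field_simp
  have hbj : b j = 1 := by
    rw [hbdef]
    simp only
    rw [← hNdef, mul_inv_cancel₀ hkl]
  refine ⟨a, b, N, ?_, hNne, hN2, ?_⟩
  · exact Function.ne_iff.mpr ⟨j, by rw [hbj]; exact one_ne_zero⟩
  · intro i
    rw [← hkey i]
    abel

private def Nc (K : Type*) [Field K] : Option K → Matrix (Fin 2) (Fin 2) K
  | none => Emat K
  | some t => !![t, -(t*t); 1, -t]

private lemma Nc_ne_zero (o : Option K) : Nc K o ≠ 0 := by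
  cases o with
  | none => intro h; have := congr_fun (congr_fun h 0) 1; simp [Nc, Emat] at this
  | some t => intro h; have := congr_fun (congr_fun h 1) 0; simp [Nc] at this

private lemma Nc_sq (o : Option K) : Nc K o * Nc K o = 0 := by
  cases o with
  | none =>
    ext i j; fin_cases i <;> fin_cases j <;> simp [Nc, Emat, Matrix.mul_apply, Fin.sum_univ_two]
  | some t =>
    ext i j
    fin_cases i <;> fin_cases j <;>
      (simp [Nc, Matrix.mul_apply, Fin.sum_univ_two]; try ring)

private lemma Nc_det (o : Option K) : (Nc K o).det = 0 := by
  cases o <;> (rw [Matrix.det_fin_two]; simp [Nc, Emat]; try ring)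

private lemma det_aux (c β : K) (o : Option K) :
    (c • (1 : Matrix (Fin 2) (Fin 2) K) + β • Nc K o).det = c * c := by
  cases o with
  | none =>
    rw [Matrix.det_fin_two]
    simp [Nc, Emat, Matrix.one_apply]
  | some t =>
    rw [Matrix.det_fin_two]
    simp [Nc, Matrix.one_apply]
    ring

private lemma U1 {α β α' β' : K} {o o' : Option K}
    (h : α • (1 : Matrix (Fin 2) (Fin 2) K) + β • Nc K o = α' • 1 + β' • Nc K o') : α = α' := by
  have e1 : α • (1 : Matrix (Fin 2) (Fin 2) K) + β • Nc K o - α' • 1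
      = (α - α') • 1 + β • Nc K o := by module
  have h2 : (α - α') • (1 : Matrix (Fin 2) (Fin 2) K) + β • Nc K o = β' • Nc K o' := by
    rw [← e1, h, add_sub_cancel_left]
  have hdet := congrArg Matrix.det h2
  rw [det_aux, Matrix.det_smul, Nc_det, mul_zero] at hdet
  exact sub_eq_zero.mp (mul_self_eq_zero.mp hdet)

private lemma U2 {β β' : K} {o o' : Option K} (hβ : β ≠ 0)
    (h : β • Nc K o = β' • Nc K o') : o = o' ∧ β = β' := by
  have h10 := congr_fun (congr_fun h 1) 0
  have h01 := congr_fun (congr_fun h 0) 1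
  have h00 := congr_fun (congr_fun h 0) 0
  cases o with
  | none =>
    cases o' with
    | none =>
      simp [Nc, Emat] at h01
      exact ⟨rfl, h01⟩
    | some t' =>
      simp [Nc, Emat] at h10 h01
      rw [← h10] at h01
      simp at h01
      exact absurd h01 hβ
  | some t =>
    cases o' with
    | none =>
      simp [Nc, Emat] at h10
      exact absurd h10 hβ
    | some t' =>
      simp [Nc] at h10 h00
      subst h10
      have ht : t = t' := by
        rcases mul_eq_zero.mp (show β * (t - t') = 0 by linear_combination h00) with h | h
        · exact absurd h hβ
        · exact sub_eq_zero.mp h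
      exact ⟨by rw [ht], rfl⟩

private lemma smul_Nc_inj {β β' : K} {o : Option K} (h : β • Nc K o = β' • Nc K o) : β = β' := by
  cases o with
  | none =>
    have h01 := congr_fun (congr_fun h 0) 1
    simpa [Nc, Emat] using h01
  | some t =>
    have h10 := congr_fun (congr_fun h 1) 0
    simpa [Nc] using h10

private lemma norm_case2 (N : Matrix (Fin 2) (Fin 2) K)
    (hsq : ∀ i j, N i 0 * N 0 j + N i 1 * N 1 j = 0) (hz : ¬ N 1 0 = 0) :
    N = N 1 0 • !![N 0 0 / N 1 0, -((N 0 0 / N 1 0)*(N 0 0 / N 1 0)); 1, -(N 0 0 / N 1 0)] := by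
  have hw : N 1 1 = -N 0 0 := by
    rcases mul_eq_zero.mp (show N 1 0 * (N 0 0 + N 1 1) = 0 by linear_combination hsq 1 0)
      with h | h
    · exact absurd h hz
    · exact eq_neg_of_add_eq_zero_right h
  have hy : N 0 1 * N 1 0 = -(N 0 0 * N 0 0) := by linear_combination hsq 0 0
  ext i j
  fin_cases i <;> fin_cases j
  · show N 0 0 = _
    simp; field_simp
  · show N 0 1 = _
    simp; field_simp
    linear_combination hy
  · show N 1 0 = _
    simp
  · show N 1 1 = _
    simp; field_simp
    linear_combination hw

private lemma Nc_norm (N : Matrix (Fin 2) (Fin 2) K) (hN : N ≠ 0) (hN2 : N * N = 0) :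
    ∃ c : K, c ≠ 0 ∧ ∃ o : Option K, N = c • Nc K o := by
  have hsq : ∀ i j, N i 0 * N 0 j + N i 1 * N 1 j = 0 := by
    intro i j
    have := congr_fun (congr_fun hN2 i) j
    simpa [Matrix.mul_apply, Fin.sum_univ_two] using this
  by_cases hz : N 1 0 = 0
  · have h00 : N 0 0 = 0 :=
      mul_self_eq_zero.mp (by linear_combination hsq 0 0 - N 0 1 * hz)
    have h11 : N 1 1 = 0 :=
      mul_self_eq_zero.mp (by linear_combination hsq 1 1 - N 0 1 * hz)
    have h01 : N 0 1 ≠ 0 := by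
      intro h
      apply hN
      ext i j
      fin_cases i <;> fin_cases j <;> simp_all
    refine ⟨N 0 1, h01, none, ?_⟩
    ext i j
    fin_cases i <;> fin_cases j <;> simp_all [Nc, Emat]
  · exact ⟨N 1 0, hz, some (N 0 0 / N 1 0), norm_case2 N hsq hz⟩

private lemma count_main (Fq : Type*) [Field Fq] [Fintype Fq] (m : ℕ) :
    Nat.card {A : Fin m → Matrix (Fin 2) (Fin 2) Fq //
      ∃ a b : Fin m → Fq, ∃ N : Matrix (Fin 2) (Fin 2) Fq,
        b ≠ 0 ∧ N ≠ 0 ∧ N * N = 0 ∧ ∀ i, A i = a i • 1 + b i • N}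
    = (Fintype.card Fq) ^ m * ((Fintype.card Fq) ^ m - 1) * (Fintype.card Fq + 1) := by
  classical
  set T := {A : Fin m → Matrix (Fin 2) (Fin 2) Fq //
      ∃ a b : Fin m → Fq, ∃ N : Matrix (Fin 2) (Fin 2) Fq,
        b ≠ 0 ∧ N ≠ 0 ∧ N * N = 0 ∧ ∀ i, A i = a i • 1 + b i • N} with hT
  set f : (Fin m → Fq) × Option Fq × {b : Fin m → Fq // b ≠ 0} → T :=
    fun x => ⟨fun i => x.1 i • 1 + (x.2.2 : Fin m → Fq) i • Nc Fq x.2.1,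
      x.1, x.2.2, Nc Fq x.2.1, x.2.2.2, Nc_ne_zero _, Nc_sq _, fun i => rfl⟩ with hf
  have hinj : Function.Injective f := by
    rintro ⟨a, o, b, hb⟩ ⟨a', o', b', hb'⟩ h
    have hfun : ∀ i, a i • (1 : Matrix (Fin 2) (Fin 2) Fq) + b i • Nc Fq o
        = a' i • 1 + b' i • Nc Fq o' := by
      intro i
      exact congr_fun (congr_arg Subtype.val h) i
    have ha : a = a' := funext fun i => U1 (hfun i)
    have hsm : ∀ i, b i • Nc Fq o = b' i • Nc Fq o' := by
      intro i
      have := hfun i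
      rw [ha] at this
      exact add_left_cancel this
    obtain ⟨j, hbj⟩ := Function.ne_iff.mp hb
    obtain ⟨ho, hbjj⟩ := U2 hbj (hsm j)
    have hb_eq : b = b' := by
      funext i
      apply smul_Nc_inj (o := o)
      rw [hsm i, ho]
    subst ha ho hb_eq
    rfl
  have hsurj : Function.Surjective f := by
    rintro ⟨A, a, b, N, hb, hN, hN2, hA⟩
    obtain ⟨c, hc, o, hNo⟩ := Nc_norm N hN hN2
    obtain ⟨j, hbj⟩ := Function.ne_iff.mp hb
    refine ⟨⟨a, o, ⟨fun i => b i * c, ?_⟩⟩, ?_⟩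
    · exact Function.ne_iff.mpr ⟨j, mul_ne_zero hbj hc⟩
    · apply Subtype.ext
      funext i
      show a i • 1 + (b i * c) • Nc Fq o = A i
      rw [hA i, hNo, smul_smul]
  have hbij : Nat.card ((Fin m → Fq) × Option Fq × {b : Fin m → Fq // b ≠ 0}) = Nat.card T :=
    Nat.card_eq_of_bijective f ⟨hinj, hsurj⟩
  rw [← hbij]
  rw [Nat.card_eq_fintype_card, Fintype.card_prod, Fintype.card_prod, Fintype.card_option,
    Fintype.card_fun, Fintype.card_fin]
  have hsub : Fintype.card {b : Fin m → Fq // b ≠ 0}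
      = Fintype.card Fq ^ m - 1 := by
    rw [Fintype.card_subtype_compl, Fintype.card_subtype_eq, Fintype.card_fun, Fintype.card_fin]
  rw [hsub]
  ring_nf

end Helpers

/-- the number of `m`-tuples of `2 × 2` matrices over `F_q` that, over the
algebraic closure, are simultaneously conjugate into the unipotent algebra
`N₂ = F̄_q⟨E₁₂⟩` and generate it (i.e. `|Rep₂(m)_u(F_q)|`) equals `q^m(q^m-1)(q+1)`. -/
theorem stmt_9 (Fq : Type*) [Field Fq] [Fintype Fq] (q m : ℕ) (hq : Fintype.card Fq = q) :
    Nat.card {A : Fin m → Matrix (Fin 2) (Fin 2) Fq //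
        ∃ P : GL (Fin 2) (AlgebraicClosure Fq),
          Algebra.adjoin (AlgebraicClosure Fq)
              (Set.range fun i => (P : Matrix (Fin 2) (Fin 2) (AlgebraicClosure Fq)) *
                (A i).map (algebraMap Fq (AlgebraicClosure Fq)) *
                ((P⁻¹ : GL (Fin 2) (AlgebraicClosure Fq)) :
                  Matrix (Fin 2) (Fin 2) (AlgebraicClosure Fq)))
            = Algebra.adjoin (AlgebraicClosure Fq)
                {Matrix.single 0 1 (1 : AlgebraicClosure Fq)}}
      = q ^ m * (q ^ m - 1) * (q + 1) := by
  classical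
  have hiff : ∀ A : Fin m → Matrix (Fin 2) (Fin 2) Fq,
      (∃ P : GL (Fin 2) (AlgebraicClosure Fq),
          Algebra.adjoin (AlgebraicClosure Fq)
              (Set.range fun i => (P : Matrix (Fin 2) (Fin 2) (AlgebraicClosure Fq)) *
                (A i).map (algebraMap Fq (AlgebraicClosure Fq)) *
                ((P⁻¹ : GL (Fin 2) (AlgebraicClosure Fq)) :
                  Matrix (Fin 2) (Fin 2) (AlgebraicClosure Fq)))
            = Algebra.adjoin (AlgebraicClosure Fq)
                {Matrix.single 0 1 (1 : AlgebraicClosure Fq)})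
      ↔ (∃ a b : Fin m → Fq, ∃ N : Matrix (Fin 2) (Fin 2) Fq,
          b ≠ 0 ∧ N ≠ 0 ∧ N * N = 0 ∧ ∀ i, A i = a i • 1 + b i • N) := by
    intro A
    have hset : ({Matrix.single 0 1 (1 : AlgebraicClosure Fq)} :
        Set (Matrix (Fin 2) (Fin 2) (AlgebraicClosure Fq))) = {Emat (AlgebraicClosure Fq)} := by
      rw [Emat_eq_std]
    rw [hset]
    constructor
    · rintro ⟨P, hP⟩
      exact key_fwd Fq A P hP
    · rintro ⟨a, b, N, hb, hN, hN2, hA⟩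
      exact key_back Fq A a b N hb hN hN2 hA
  rw [Nat.card_congr (Equiv.subtypeEquivRight hiff), count_main Fq m, hq]
end

section
/- The number of F_q-points of the character variety of unipotent 2-dimensional representations of the free monoid on m generators, |Ch_2(m)_u(F_q)|, equals q^m(q^m - 1)/(q - 1). -/
open Projectivization

noncomputable def projEquiv (K V : Type*) [Field K] [AddCommGroup V] [Module K V] :
    Projectivization K V × Kˣ ≃ {v : V // v ≠ 0} := by
  refine Equiv.ofBijective (fun x => ⟨(x.2 : K) • x.1.rep,
    smul_ne_zero (Units.ne_zero _) x.1.rep_nonzero⟩) ⟨?_, ?_⟩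
  · rintro ⟨p, u⟩ ⟨p', u'⟩ h
    simp only [Subtype.mk.injEq] at h
    have hp : p = p' := by
      rw [← p.mk_rep, ← p'.mk_rep]
      rw [mk_eq_mk_iff]
      refine ⟨u⁻¹ * u', ?_⟩
      show ((u⁻¹ * u' : Kˣ) : K) • p'.rep = p.rep
      push_cast
      rw [mul_smul, ← h, inv_smul_smul₀ (Units.ne_zero u)]
    subst hp
    have : (u : K) = u' := by
      have := smul_left_injective K p.rep_nonzero h
      exact_mod_cast this
    simp [Prod.ext_iff, Units.ext_iff, this]
  · rintro ⟨v, hv⟩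
    obtain ⟨a, ha⟩ := exists_smul_eq_mk_rep K v hv
    exact ⟨⟨mk K v hv, a⁻¹⟩, by simp [← ha, Units.smul_def, smul_smul, Subtype.ext_iff]⟩

/-- the number of `F_q`-points of the character variety `Ch₂(m)_u` of
unipotent 2-dimensional representations, which is in natural bijection with
`F_q^m × P^{m-1}(F_q)`, equals `q^m(q^m-1)/(q-1)`. -/
theorem stmt_10 (Fq : Type*) [Field Fq] [Fintype Fq] (q m : ℕ) (hq : Fintype.card Fq = q) :
    Nat.card ((Fin m → Fq) × Projectivization Fq (Fin m → Fq))
      = q ^ m * (q ^ m - 1) / (q - 1) := by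
  subst hq
  have e := projEquiv Fq (Fin m → Fq)
  have hcard : Nat.card (Projectivization Fq (Fin m → Fq)) * (Fintype.card Fq - 1)
      = Fintype.card Fq ^ m - 1 := by
    classical
    have := Nat.card_eq_of_bijective e e.bijective
    rw [Nat.card_prod, Nat.card_units, Nat.card_eq_fintype_card (α := Fq)] at this
    rw [this, Nat.card_eq_fintype_card]
    simp [Fintype.card_subtype_compl, Fintype.card_fun]
  have hdvd : (Fintype.card Fq - 1) ∣ (Fintype.card Fq ^ m - 1) := by
    simpa using Nat.sub_dvd_pow_sub_pow (Fintype.card Fq) 1 m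
  rw [Nat.card_prod, Nat.card_eq_fintype_card, Fintype.card_fun, Fintype.card_fin,
    Nat.mul_div_assoc _ hdvd, ← hcard]
  have h1 : 1 ≤ Fintype.card Fq := Fintype.card_pos
  rw [Nat.mul_div_cancel]
  have : 2 ≤ Fintype.card Fq := Fintype.one_lt_card
  omega
end
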